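/- arXiv:1204.6227 — 7 statements merged into one kernel-verified Lean document; each statement's English description precedes it below -/
import Mathlib

section
/- The sequence m_n := C(2n,n)/4^n satisfies the nonlinear recurrence m_n = Σ_{k=0}^{n-1} m_{n-k-1} (m_k - m_{k+1}) for all n ≥ 1. -/
/-!
Write `S n = ∑_{i+j=n} m i * m j`. After reindexing, the right-hand side of the recurrence is
`m 0 * m n + S (n-1) - S n`, so it suffices that `S` is constant, i.e. `S n = m 0 ^ 2 = 1`.
This follows from `2 (i+1) m (i+1) = (2i+1) m i` alone: by symmetry
`2 ∑_{i+j=n} i m i m j = n S n`, and shifting `i` by one turns `(n+1) S (n+1)` into `n S n + S n`.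
-/

open Finset Finset.Nat

section SelfConvolution

variable {R : Type*}

theorem two_mul_sum_antidiagonal_fst_mul [CommSemiring R] (a : ℕ → R) (n : ℕ) :
    2 * ∑ p ∈ antidiagonal n, (p.1 : R) * (a p.1 * a p.2) =
      n * ∑ p ∈ antidiagonal n, a p.1 * a p.2 := by
  have hswap : ∑ p ∈ antidiagonal n, (p.1 : R) * (a p.1 * a p.2) =
      ∑ p ∈ antidiagonal n, (p.2 : R) * (a p.1 * a p.2) := by
    rw [← sum_antidiagonal_swap]
    exact sum_congr rfl fun p _ => by simp only [Prod.fst_swap, Prod.snd_swap]; ring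
  calc 2 * ∑ p ∈ antidiagonal n, (p.1 : R) * (a p.1 * a p.2)
      = ∑ p ∈ antidiagonal n, ((p.1 + p.2 : ℕ) : R) * (a p.1 * a p.2) := by
        rw [two_mul]
        nth_rewrite 2 [hswap]
        simp only [Nat.cast_add, add_mul, sum_add_distrib]
    _ = n * ∑ p ∈ antidiagonal n, a p.1 * a p.2 := by
        rw [mul_sum]
        exact sum_congr rfl fun p hp => by rw [mem_antidiagonal.1 hp]

theorem sum_antidiagonal_mul_sub_succ [CommRing R] (a : ℕ → R) (n : ℕ) :
    ∑ p ∈ antidiagonal n, a p.2 * (a p.1 - a (p.1 + 1)) =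
      a 0 * a (n + 1) + ∑ p ∈ antidiagonal n, a p.1 * a p.2 -
        ∑ p ∈ antidiagonal (n + 1), a p.1 * a p.2 := by
  have hsplit : ∑ p ∈ antidiagonal n, a p.2 * (a p.1 - a (p.1 + 1)) =
      ∑ p ∈ antidiagonal n, a p.1 * a p.2 - ∑ p ∈ antidiagonal n, a (p.1 + 1) * a p.2 := by
    rw [← sum_sub_distrib]
    exact sum_congr rfl fun p _ => by ring
  rw [hsplit, sum_antidiagonal_succ]
  ring

variable [CommRing R] [IsDomain R] [CharZero R]

theorem sum_antidiagonal_succ_mul_eq_of_recurrence (a : ℕ → R)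
    (ha : ∀ i : ℕ, 2 * (i + 1) * a (i + 1) = (2 * i + 1) * a i) (n : ℕ) :
    ∑ p ∈ antidiagonal (n + 1), a p.1 * a p.2 = ∑ p ∈ antidiagonal n, a p.1 * a p.2 := by
  refine mul_left_cancel₀ (Nat.cast_add_one_ne_zero n) ?_
  calc ((n : R) + 1) * ∑ p ∈ antidiagonal (n + 1), a p.1 * a p.2
      = 2 * ∑ p ∈ antidiagonal (n + 1), (p.1 : R) * (a p.1 * a p.2) := by
        rw [two_mul_sum_antidiagonal_fst_mul, Nat.cast_succ]
    _ = ∑ p ∈ antidiagonal n, (2 * p.1 + 1) * a p.1 * a p.2 := by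
        rw [sum_antidiagonal_succ, Nat.cast_zero, zero_mul, zero_add, mul_sum]
        exact sum_congr rfl fun p _ => by rw [Nat.cast_succ, ← mul_assoc, ← mul_assoc, ha]
    _ = 2 * ∑ p ∈ antidiagonal n, (p.1 : R) * (a p.1 * a p.2) +
          ∑ p ∈ antidiagonal n, a p.1 * a p.2 := by
        rw [mul_sum, ← sum_add_distrib]
        exact sum_congr rfl fun p _ => by ring
    _ = ((n : R) + 1) * ∑ p ∈ antidiagonal n, a p.1 * a p.2 := by
        rw [two_mul_sum_antidiagonal_fst_mul]
        ring

theorem sum_antidiagonal_mul_eq_sq_of_recurrence (a : ℕ → R)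
    (ha : ∀ i : ℕ, 2 * (i + 1) * a (i + 1) = (2 * i + 1) * a i) (n : ℕ) :
    ∑ p ∈ antidiagonal n, a p.1 * a p.2 = a 0 ^ 2 := by
  induction n with
  | zero => simp [sq]
  | succ n ih => rw [sum_antidiagonal_succ_mul_eq_of_recurrence a ha, ih]

end SelfConvolution

theorem centralBinom_div_four_pow_recurrence {K : Type*} [Field K] [CharZero K] (i : ℕ) :
    2 * (i + 1) * ((i + 1).centralBinom / 4 ^ (i + 1) : K) =
      (2 * i + 1) * (i.centralBinom / 4 ^ i) := by
  have h : ((i : K) + 1) * (i + 1).centralBinom = 2 * (2 * i + 1) * i.centralBinom := by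
    exact_mod_cast Nat.succ_mul_centralBinom_succ i
  rw [pow_succ]
  field_simp
  linear_combination 2 * h

/-- The sequence `m n = C(2n,n)/4^n` satisfies the nonlinear recurrence
`m n = ∑_{k=0}^{n-1} m (n-k-1) * (m k - m (k+1))` for all `n ≥ 1`. -/
theorem stmt1 (m : ℕ → ℚ) (hm : ∀ j : ℕ, m j = ((2 * j).choose j : ℚ) / 4 ^ j) :
    ∀ n : ℕ, 1 ≤ n →
      m n = ∑ k ∈ Finset.range n, m (n - k - 1) * (m k - m (k + 1)) := by
  have hrec : ∀ i : ℕ, 2 * ((i : ℚ) + 1) * m (i + 1) = (2 * i + 1) * m i := by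
    intro i
    simpa only [hm, Nat.centralBinom_eq_two_mul_choose] using
      centralBinom_div_four_pow_recurrence (K := ℚ) i
  have hm0 : m 0 = 1 := by simp [hm]
  have hconv (n : ℕ) : ∑ p ∈ antidiagonal n, m p.1 * m p.2 = 1 := by
    rw [sum_antidiagonal_mul_eq_sq_of_recurrence m hrec, hm0, one_pow]
  rintro (_ | N) hN
  · omega
  have key := sum_antidiagonal_mul_sub_succ m N
  rw [hconv, hconv, hm0, sum_antidiagonal_eq_sum_range_succ (fun i j => m j * (m i - m (i + 1)))]
    at key
  have hsub (k : ℕ) : N + 1 - k - 1 = N - k := by omega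
  simp only [hsub, key]
  ring
end

section
/- For every integer k ≥ 1 and complex z with |z| < 1, Σ_{n≥0} C(2n+2k, n) z^n / 4^n = (4^k / √(1-z)) · 1/(1+√(1-z))^{2k}. -/
open Complex

/-!
The binomial series gives `(1 - z)^(-1/2) = ∑ C(n - 1/2, n) zⁿ = ∑ C(2n, n) zⁿ / 4ⁿ` on the unit
disc. Writing `Sₘ` for `∑ C(2n+m, n) zⁿ / 4ⁿ` and `u = √(1-z)`, Pascal's rule gives
`S₁ = (2/z)(S₀ - 1)` and `Sₘ₊₂ = (4/z)(Sₘ₊₁ - Sₘ)`, and since `z = (1 - u)(1 + u)` these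
recurrences are solved by `Sₘ = 2ᵐ / (u (1 + u)ᵐ)`.
-/

open Polynomial in
lemma ascPochhammer_eval_half {𝕜 : Type*} [Field 𝕜] [CharZero 𝕜] (n : ℕ) :
    (ascPochhammer 𝕜 n).eval (1 / 2) = n.factorial * n.centralBinom / 4 ^ n := by
  induction n with
  | zero => simp
  | succ n ih =>
    have h : ((n : 𝕜) + 1) * (n + 1).centralBinom = 2 * (2 * n + 1) * n.centralBinom := by
      exact_mod_cast Nat.succ_mul_centralBinom_succ n
    rw [ascPochhammer_succ_eval, ih, Nat.factorial_succ, pow_succ]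
    push_cast
    field_simp
    linear_combination (-2 * (n.factorial : 𝕜)) * h

open Polynomial in
lemma Ring.choose_half_add_sub_one {𝕜 : Type*} [Field 𝕜] [CharZero 𝕜] (n : ℕ) :
    Ring.choose (1 / 2 + n - 1 : 𝕜) n = n.centralBinom / 4 ^ n := by
  rw [Ring.choose_eq_smul, descPochhammer_smeval_eq_ascPochhammer, ascPochhammer_smeval_eq_eval,
    show (1 / 2 + n - 1 - n + 1 : 𝕜) = 1 / 2 by ring, ascPochhammer_eval_half, smul_eq_mul]
  field_simp [Nat.factorial_ne_zero]

lemma Complex.hasSum_centralBinom_mul_pow_div_four_pow {z : ℂ} (hz : ‖z‖ < 1) :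
    HasSum (fun n => (n.centralBinom : ℂ) * z ^ n / 4 ^ n) (1 / (1 - z) ^ (1 / 2 : ℂ)) := by
  have h := (one_div_one_sub_cpow_hasFPowerSeriesOnBall_zero (1 / 2)).hasSum
    (y := z) (by simpa [edist_dist] using ENNReal.ofReal_lt_one.mpr hz)
  simp only [FormalMultilinearSeries.ofScalars_apply_eq, Ring.choose_half_add_sub_one, zero_add,
    smul_eq_mul] at h
  simpa only [div_mul_eq_mul_div] using h

section Recurrence

variable {𝕜 : Type*} [Field 𝕜] [CharZero 𝕜] [TopologicalSpace 𝕜] [IsTopologicalRing 𝕜]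
  {z : 𝕜}

lemma hasSum_choose_two_mul_add_one (hz : z ≠ 0) {s : 𝕜}
    (h : HasSum (fun n => (n.centralBinom : 𝕜) * z ^ n / 4 ^ n) s) :
    HasSum (fun n => ((2 * n + 1).choose n : 𝕜) * z ^ n / 4 ^ n) (2 / z * (s - 1)) := by
  have hterm (n : ℕ) : 2 / z * ((n + 1).centralBinom * z ^ (n + 1) / 4 ^ (n + 1))
      = ((2 * n + 1).choose n : 𝕜) * z ^ n / 4 ^ n := by
    rw [Nat.centralBinom_eq_two_mul_choose, show 2 * (n + 1) = 2 * n + 1 + 1 by ring,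
      Nat.choose_succ_succ', Nat.choose_symm_half]
    push_cast
    field_simp
    ring
  simpa [hterm] using ((hasSum_nat_add_iff' 1).mpr h).mul_left (2 / z)

lemma hasSum_choose_two_mul_add_add_two (hz : z ≠ 0) {m : ℕ} {s t : 𝕜}
    (hs : HasSum (fun n => ((2 * n + m).choose n : 𝕜) * z ^ n / 4 ^ n) s)
    (ht : HasSum (fun n => ((2 * n + (m + 1)).choose n : 𝕜) * z ^ n / 4 ^ n) t) :
    HasSum (fun n => ((2 * n + (m + 2)).choose n : 𝕜) * z ^ n / 4 ^ n) (4 / z * (t - s)) := by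
  have hterm (n : ℕ) : 4 / z * (((2 * (n + 1) + (m + 1)).choose (n + 1) : 𝕜) * z ^ (n + 1) /
      4 ^ (n + 1) - ((2 * (n + 1) + m).choose (n + 1) : 𝕜) * z ^ (n + 1) / 4 ^ (n + 1))
      = ((2 * n + (m + 2)).choose n : 𝕜) * z ^ n / 4 ^ n := by
    rw [show 2 * (n + 1) + (m + 1) = 2 * n + (m + 2) + 1 by ring, Nat.choose_succ_succ',
      show 2 * (n + 1) + m = 2 * n + (m + 2) by ring]
    push_cast
    field_simp
    ring
  simpa [hterm] using
    (((hasSum_nat_add_iff' 1).mpr ht).sub ((hasSum_nat_add_iff' 1).mpr hs)).mul_left (4 / z)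

lemma hasSum_choose_two_mul_add_of_sq_eq (hz : z ≠ 0) {u : 𝕜} (hu : u ^ 2 = 1 - z) (hu0 : u ≠ 0)
    (h : HasSum (fun n => (n.centralBinom : 𝕜) * z ^ n / 4 ^ n) u⁻¹) (m : ℕ) :
    HasSum (fun n => ((2 * n + m).choose n : 𝕜) * z ^ n / 4 ^ n) (2 ^ m / (u * (1 + u) ^ m)) := by
  have hz' : z = (1 - u) * (1 + u) := by linear_combination hu
  have hsub : 1 - u ≠ 0 := left_ne_zero_of_mul (hz' ▸ hz)
  have hadd : 1 + u ≠ 0 := right_ne_zero_of_mul (hz' ▸ hz)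
  induction m using Nat.twoStepInduction with
  | zero => simpa [Nat.centralBinom_eq_two_mul_choose] using h
  | one =>
    convert hasSum_choose_two_mul_add_one hz h using 1
    rw [hz']
    field_simp
  | more m ih₀ ih₁ =>
    convert hasSum_choose_two_mul_add_add_two hz ih₀ ih₁ using 1
    rw [hz']
    field_simp
    ring

end Recurrence

lemma Complex.hasSum_choose_two_mul_add {z : ℂ} (hz : ‖z‖ < 1) (m : ℕ) :
    HasSum (fun n => ((2 * n + m).choose n : ℂ) * z ^ n / 4 ^ n)
      (2 ^ m / ((1 - z) ^ (1 / 2 : ℂ) * (1 + (1 - z) ^ (1 / 2 : ℂ)) ^ m)) := by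
  rcases eq_or_ne z 0 with rfl | hz0
  · have h := hasSum_single (f := fun n => ((2 * n + m).choose n : ℂ) * 0 ^ n / 4 ^ n) 0
      (fun n hn => by simp [hn])
    simpa [one_add_one_eq_two] using h
  · have hu : ((1 - z) ^ (1 / 2 : ℂ)) ^ 2 = 1 - z := by
      rw [one_div, cpow_ofNat_inv_pow]
    have hu0 : (1 - z) ^ (1 / 2 : ℂ) ≠ 0 := by
      rw [Ne, cpow_eq_zero_iff, sub_eq_zero]
      rintro ⟨rfl, -⟩
      simp at hz
    refine hasSum_choose_two_mul_add_of_sq_eq hz0 hu hu0 ?_ m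
    simpa only [one_div] using hasSum_centralBinom_mul_pow_div_four_pow hz

theorem stmt4_general (k : ℕ) (z : ℂ) (hz : ‖z‖ < 1) :
    HasSum (fun n : ℕ => ((2 * n + 2 * k).choose n : ℂ) * z ^ n / 4 ^ n)
      ((4 : ℂ) ^ k / ((1 - z) ^ ((1 : ℂ) / 2) * (1 + (1 - z) ^ ((1 : ℂ) / 2)) ^ (2 * k))) := by
  have h := hasSum_choose_two_mul_add hz (2 * k)
  rwa [pow_mul (2 : ℂ), show (2 : ℂ) ^ 2 = 4 by norm_num] at h

/-- For every `k ≥ 1` and `‖z‖ < 1`,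
`∑_{n≥0} C(2n+2k, n) zⁿ/4ⁿ = 4^k / (√(1-z) (1+√(1-z))^{2k})` (principal branch). -/
theorem stmt4 (k : ℕ) (hk : 1 ≤ k) (z : ℂ) (hz : ‖z‖ < 1) :
    HasSum (fun n : ℕ => ((2 * n + 2 * k).choose n : ℂ) * z ^ n / 4 ^ n)
      ((4 : ℂ) ^ k / ((1 - z) ^ ((1 : ℂ) / 2) * (1 + (1 - z) ^ ((1 : ℂ) / 2)) ^ (2 * k))) :=
  stmt4_general k z hz
end

section
/- The map α(z) = z/(1+√(1-z))^2 maps the open unit disc of ℂ into itself, and satisfies z√(1-z)·α'(z) = α(z) on the open unit disc (with the principal branch of the square root). -/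
/-!
Write `w = √(1 - z)`. Since `w² = 1 - z`, `α(z) = (1 - w) / (1 + w)` is the Cayley transform of
`w`, and for `‖z‖ < 1` the point `1 - z` lies in the right half-plane, so `Re w > 0` and hence
`‖1 - w‖ < ‖1 + w‖`. Differentiating with `w' = -1 / (2w)` gives `α'(z) = 1 / (w (1 + w)²)`, so
`z w α'(z) = z / (1 + w)² = α(z)`.
-/

open Complex

noncomputable def alphaMap (z : ℂ) : ℂ := z / (1 + (1 - z) ^ ((1 : ℂ) / 2)) ^ 2

namespace Complex

lemma one_sub_mem_slitPlane_of_norm_lt_one {z : ℂ} (hz : ‖z‖ < 1) : 1 - z ∈ slitPlane := by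
  simpa [sub_eq_add_neg] using mem_slitPlane_of_norm_lt_one (z := -z) (by simpa)

lemma cpow_inv_two_ne_zero {x : ℂ} (hx : x ≠ 0) : x ^ (2⁻¹ : ℂ) ≠ 0 :=
  (cpow_ne_zero_iff_of_exponent_ne_zero (by norm_num)).mpr hx

lemma one_add_cpow_inv_two_ne_zero (x : ℂ) : 1 + x ^ (2⁻¹ : ℂ) ≠ 0 := by
  refine ne_of_apply_ne re (ne_of_gt ?_)
  rw [add_re, one_re, zero_re, cpow_inv_two_re]
  positivity

lemma re_cpow_inv_two_pos {x : ℂ} (hx : x ∈ slitPlane) : 0 < (x ^ (2⁻¹ : ℂ)).re := by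
  rw [cpow_inv_two_re, Real.sqrt_pos]
  rcases mem_slitPlane_iff.mp hx with hre | him
  · linarith [norm_nonneg x]
  · linarith [neg_abs_le x.re, abs_re_lt_norm.mpr him]

lemma norm_one_sub_lt_norm_one_add {w : ℂ} (hw : 0 < w.re) : ‖1 - w‖ < ‖1 + w‖ := by
  rw [← sq_lt_sq₀ (norm_nonneg _) (norm_nonneg _), Complex.sq_norm, Complex.sq_norm,
    normSq_apply, normSq_apply]
  simp only [sub_re, add_re, one_re, sub_im, add_im, one_im]
  nlinarith

lemma _root_.HasDerivAt.cpow_inv_two {f : ℂ → ℂ} {f' x : ℂ} (hf : HasDerivAt f f' x)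
    (hx : f x ∈ slitPlane) :
    HasDerivAt (fun y => f y ^ (2⁻¹ : ℂ)) (f' / (2 * f x ^ (2⁻¹ : ℂ))) x := by
  refine (hf.cpow_const hx).congr_deriv ?_
  have hsq := cpow_ofNat_inv_pow (f x) 2
  have hw0 := cpow_inv_two_ne_zero (slitPlane_ne_zero hx)
  rw [cpow_sub _ _ (slitPlane_ne_zero hx), cpow_one]
  generalize f x ^ (2⁻¹ : ℂ) = w at *
  rw [← hsq]
  field_simp

end Complex

lemma alphaMap_eq_div (z : ℂ) :
    alphaMap z = (1 - (1 - z) ^ (2⁻¹ : ℂ)) / (1 + (1 - z) ^ (2⁻¹ : ℂ)) := by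
  have hw := cpow_ofNat_inv_pow (1 - z) 2
  have hne := one_add_cpow_inv_two_ne_zero (1 - z)
  rw [alphaMap, one_div, div_eq_div_iff (pow_ne_zero 2 hne) hne]
  linear_combination (1 + (1 - z) ^ (2⁻¹ : ℂ)) * hw

lemma norm_alphaMap_lt_one {z : ℂ} (hz : 1 - z ∈ slitPlane) : ‖alphaMap z‖ < 1 := by
  have hne := one_add_cpow_inv_two_ne_zero (1 - z)
  rw [alphaMap_eq_div, norm_div, div_lt_one (norm_pos_iff.mpr hne)]
  exact norm_one_sub_lt_norm_one_add (re_cpow_inv_two_pos hz)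

lemma hasDerivAt_alphaMap {z : ℂ} (hz : 1 - z ∈ slitPlane) :
    HasDerivAt alphaMap ((1 - z) ^ (2⁻¹ : ℂ) * (1 + (1 - z) ^ (2⁻¹ : ℂ)) ^ 2)⁻¹ z := by
  set w := (1 - z) ^ (2⁻¹ : ℂ) with hw_def
  have hw : w ^ 2 = 1 - z := cpow_ofNat_inv_pow (1 - z) 2
  have hw0 : w ≠ 0 := cpow_inv_two_ne_zero (slitPlane_ne_zero hz)
  have hne : 1 + w ≠ 0 := one_add_cpow_inv_two_ne_zero (1 - z)
  have hsqrt : HasDerivAt (fun z => (1 - z) ^ (2⁻¹ : ℂ)) (-1 / (2 * w)) z :=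
    ((hasDerivAt_id' z).const_sub 1).cpow_inv_two hz
  have hquot := (hasDerivAt_id' z).div ((hsqrt.const_add 1).pow 2) (pow_ne_zero 2 hne)
  have hfun : alphaMap = fun z => z / (1 + (1 - z) ^ (2⁻¹ : ℂ)) ^ 2 := by
    funext z
    rw [alphaMap, one_div]
  rw [hfun]
  refine hquot.congr_deriv ?_
  simp only [Pi.pow_apply, Nat.cast_ofNat]
  rw [← hw_def]
  field_simp
  linear_combination (1 + w) * hw

/-- `α` maps the open unit disc into itself and satisfies `z √(1-z) α'(z) = α(z)` there. -/
theorem stmt5 :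
    (∀ z : ℂ, ‖z‖ < 1 → ‖alphaMap z‖ < 1) ∧
    (∀ z : ℂ, ‖z‖ < 1 → ∃ d : ℂ, HasDerivAt alphaMap d z ∧
      z * (1 - z) ^ ((1 : ℂ) / 2) * d = alphaMap z) := by
  refine ⟨fun z hz => norm_alphaMap_lt_one (one_sub_mem_slitPlane_of_norm_lt_one hz),
    fun z hz => ⟨_, hasDerivAt_alphaMap (one_sub_mem_slitPlane_of_norm_lt_one hz), ?_⟩⟩
  have hw0 := cpow_inv_two_ne_zero (slitPlane_ne_zero (one_sub_mem_slitPlane_of_norm_lt_one hz))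
  rw [alphaMap, one_div, mul_inv, ← mul_assoc, mul_assoc z, mul_inv_cancel₀ hw0, mul_one,
    div_eq_mul_inv]
end

section
/- With the convention C(m,j)=0 for j<0 or j>m, for every n ≥ 2: (1/2^{2n-1})·[ -1 + Σ_{k=1}^{n-1}(4·C(2n-2,n-1-k) - C(2n,n-k)) ] + C(2n,n)/((2n-1)·4^n) = 0. -/
open Finset

private lemma sum1 (m : ℕ) :
    ∑ k ∈ Finset.Icc 1 m, (2*m).choose (m-k) = ∑ j ∈ Finset.range m, (2*m).choose j := by
  rw [← Finset.Ico_add_one_right_eq_Icc, Finset.sum_Ico_eq_sum_range]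
  rw [← Finset.sum_range_reflect (fun j => (2*m).choose j) m]
  exact Finset.sum_congr rfl fun j hj => by congr 1; omega

private lemma sum2 (m : ℕ) :
    ∑ k ∈ Finset.Icc 1 m, (2*m+2).choose (m+1-k)
      = ∑ j ∈ Finset.range m, (2*m+2).choose (j+1) := by
  rw [← Finset.Ico_add_one_right_eq_Icc, Finset.sum_Ico_eq_sum_range]
  rw [← Finset.sum_range_reflect (fun j => (2*m+2).choose (j+1)) m]
  refine Finset.sum_congr rfl fun j hj => by
    simp only [Finset.mem_range] at hj
    congr 1; omega

private lemma halfSum (m : ℕ) :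
    2 * ∑ j ∈ Finset.range m, (2*m).choose j + (2*m).choose m = 4^m := by
  have key : ∑ j ∈ Finset.Ico (m+1) (2*m+1), (2*m).choose j
      = ∑ j ∈ Finset.range m, (2*m).choose j := by
    rw [Finset.sum_Ico_eq_sum_range]
    have h : 2*m+1 - (m+1) = m := by omega
    rw [h, ← Finset.sum_range_reflect (fun j => (2*m).choose (m+1+j)) m]
    refine Finset.sum_congr rfl fun j hj => ?_
    simp only [Finset.mem_range] at hj
    have h1 : m+1+(m-1-j) = 2*m - j := by omega
    simp only [h1]
    exact Nat.choose_symm (by omega)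
  have total := Nat.sum_range_choose (2*m)
  have split : ∑ j ∈ Finset.range (m+1), (2*m).choose j
      + ∑ j ∈ Finset.Ico (m+1) (2*m+1), (2*m).choose j
      = ∑ j ∈ Finset.range (2*m+1), (2*m).choose j := by
    simp only [Finset.range_eq_Ico]
    exact Finset.sum_Ico_consecutive _ (by omega) (by omega)
  rw [Finset.sum_range_succ, key] at split
  have hp : 2^(2*m) = 4^m := by rw [pow_mul]; norm_num
  omega

/-- Vanishing of the limit `k_n(1)` from Section 5.2: for all `n ≥ 2`,
`-1/2^(2n-1) + (1/2^(2n-1)) ∑_{k=1}^{n-1} (4 C(2n-2,n-1-k) - C(2n,n-k))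
  + (2n)!/((2n-1) (2ⁿ n!)²) = 0`. -/
theorem stmt9 (n : ℕ) (hn : 2 ≤ n) :
    -(1 / 2 ^ (2 * n - 1) : ℚ)
      + (1 / 2 ^ (2 * n - 1) : ℚ) *
        ∑ k ∈ Finset.Icc 1 (n - 1),
          (4 * ((2 * n - 2).choose (n - 1 - k) : ℚ) - ((2 * n).choose (n - k) : ℚ))
      + ((2 * n).factorial : ℚ) / ((2 * n - 1) * (2 ^ n * (n.factorial : ℚ)) ^ 2) = 0 := by
  obtain ⟨m, rfl⟩ : ∃ m, n = m + 1 := ⟨n - 1, by omega⟩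
  have e1 : 2*(m+1) - 2 = 2*m := by omega
  have e2 : 2*(m+1) - 1 = 2*m+1 := by omega
  have e3 : m + 1 - 1 = m := rfl
  have e4 : 2*(m+1) = 2*m+2 := by ring
  rw [e1, e2, e3, e4]
  set A : ℕ := ∑ j ∈ Finset.range m, (2*m).choose j with hAdef
  set B : ℕ := ∑ j ∈ Finset.range (m+1), (2*m+2).choose j with hBdef
  set c : ℕ := (2*m).choose m
  set c' : ℕ := (2*m+2).choose (m+1)
  -- the sum
  have hsum : ∑ k ∈ Finset.Icc 1 m,
      (4 * ((2*m).choose (m-k) : ℚ) - ((2*m+2).choose (m+1-k) : ℚ))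
      = 4 * (A:ℚ) - ((B:ℚ) - 1) := by
    rw [Finset.sum_sub_distrib, ← Finset.mul_sum]
    have a1 : ∑ k ∈ Finset.Icc 1 m, ((2*m).choose (m-k) : ℚ) = (A:ℚ) := by
      exact_mod_cast congrArg (Nat.cast : ℕ → ℚ) (sum1 m)
    have a2n : (∑ k ∈ Finset.Icc 1 m, (2*m+2).choose (m+1-k)) + 1 = B := by
      rw [sum2, hBdef, Finset.sum_range_succ' (fun j => (2*m+2).choose j) m]
      simp
    have a2 : ∑ k ∈ Finset.Icc 1 m, ((2*m+2).choose (m+1-k) : ℚ) = (B:ℚ) - 1 := by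
      have h : (∑ k ∈ Finset.Icc 1 m, ((2*m+2).choose (m+1-k) : ℚ)) + 1 = (B:ℚ) := by
        exact_mod_cast congrArg (Nat.cast : ℕ → ℚ) a2n
      linarith
    rw [a1, a2]
  rw [hsum]
  -- arithmetic facts
  have hA : 2*A + c = 4^m := halfSum m
  have hB : 2*B + c' = 4^(m+1) := by
    have := halfSum (m+1)
    have h : 2*(m+1) = 2*m+2 := by ring
    rwa [h] at this
  have hc : (m+1) * c' = 2*(2*m+1)*c := by
    have := Nat.succ_mul_centralBinom_succ m
    simpa [Nat.centralBinom, c, c', Nat.mul_add] using this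
  have hf : (2*m+2).factorial = c' * ((m+1).factorial)^2 := by
    have h := Nat.choose_mul_factorial_mul_factorial (n := 2*m+2) (k := m+1) (by omega)
    have h2 : 2*m+2 - (m+1) = m+1 := by omega
    rw [h2] at h
    rw [← h]; ring
  -- to ℚ
  have hS : 4*(A:ℚ) - ((B:ℚ) - 1) = 1 + (c':ℚ)/2 - 2*(c:ℚ) := by
    have h1 : 2*(A:ℚ) + c = 4^m := by exact_mod_cast hA
    have h2 : 2*(B:ℚ) + c' = 4^(m+1) := by exact_mod_cast hB
    have h3 : (4:ℚ)^(m+1) = 4*4^m := by ring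
    rw [h3] at h2
    linarith
  have hc' : ((m:ℚ)+1)*c' = 2*(2*m+1)*c := by exact_mod_cast hc
  have hf' : ((2*m+2).factorial : ℚ) = (c':ℚ) * ((m+1).factorial:ℚ)^2 := by
    exact_mod_cast hf
  rw [hS, hf']
  set f : ℚ := ((m+1).factorial : ℚ) with hfdef
  have hfac : f ≠ 0 := by rw [hfdef]; positivity
  have h2m1 : (2*((m:ℚ)+1) - 1) ≠ 0 := by nlinarith [Nat.cast_nonneg (α := ℚ) m]
  have hpow : (2:ℚ)^(2*m+1) ≠ 0 := by positivity
  have hpow2 : (2:ℚ)^(m+1) ≠ 0 := by positivity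
  push_cast
  field_simp
  ring_nf
  linear_combination 8 * (2:ℚ)^(2*m) * hc'
end

section
/- Let c(n,k) count the words equal to (ab)^k in the expansion of [(1+a)(1+b)]^n, where a, b are two noncommuting involutions (a² = b² = 1, no other relations). Then c(n,k), d(n,k) (counting words (ab)^k a) and e(n,k) (counting (ba)^k) satisfy: c(n,k)=c(n-1,k)+d(n-1,k)+d(n-1,k-1)+c(n-1,k-1) for n≥2, k≥1, with c(1,k)=δ_{k0}+δ_{k1}; d(n,k)=d(n-1,k)+c(n-1,k)+c(n-1,k+1)+d(n-1,k+1) for n≥2, k≥0, with d(1,k)=δ_{k0}; and the closed forms c(n,k)=C(2n-1,n-k), d(n,k)=C(2n-1,n-k-1)=e(n,k) hold for all n≥1, 0≤k≤n (with c(n,0)=C(2n,n)/2). -/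
/-- Binomial coefficient `C(m,j)` for integer arguments, with the convention
`C(m,j) = 0` when `j < 0` or `j > m`. -/
def intChoose (m j : ℤ) : ℤ :=
  if 0 ≤ j ∧ j ≤ m then (m.toNat).choose j.toNat else 0

/-- The free product `ℤ/2 ∗ ℤ/2`. -/
abbrev Z2Z2 : Type := Monoid.Coprod (Multiplicative (ZMod 2)) (Multiplicative (ZMod 2))

/-- The first involutive generator `a` of `ℤ/2 ∗ ℤ/2`. -/
def genA : Z2Z2 := Monoid.Coprod.inl (Multiplicative.ofAdd (1 : ZMod 2))

/-- The second involutive generator `b` of `ℤ/2 ∗ ℤ/2`. -/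
def genB : Z2Z2 := Monoid.Coprod.inr (Multiplicative.ofAdd (1 : ZMod 2))

/-- The element `[(1+a)(1+b)]ⁿ` of the group algebra `ℚ[ℤ/2 ∗ ℤ/2]`. -/
noncomputable def wordPow (n : ℕ) : MonoidAlgebra ℚ Z2Z2 :=
  ((1 + MonoidAlgebra.of ℚ Z2Z2 genA) * (1 + MonoidAlgebra.of ℚ Z2Z2 genB)) ^ n

/-- `c(n,k)`: coefficient of the reduced word `(ab)^k` in `[(1+a)(1+b)]ⁿ`. -/
noncomputable def cCoeff (n k : ℕ) : ℚ := (wordPow n).coeff ((genA * genB) ^ k)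

/-- `d(n,k)`: coefficient of the reduced word `(ab)^k a` in `[(1+a)(1+b)]ⁿ`. -/
noncomputable def dCoeff (n k : ℕ) : ℚ := (wordPow n).coeff ((genA * genB) ^ k * genA)

/-- `e(n,k)`: coefficient of the reduced word `(ba)^k` in `[(1+a)(1+b)]ⁿ`. -/
noncomputable def eCoeff (n k : ℕ) : ℚ := (wordPow n).coeff ((genB * genA) ^ k)

/-!
Sending `a ↦ sr 0` and `b ↦ sr 1` identifies `ℤ/2 ∗ ℤ/2` with the infinite dihedral group
`DihedralGroup 0`, in which `(ab)^k = r k`, `(ab)^k a = sr (-k)` and `(ba)^k = r (-k)`.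
Give `r i` the height `i` and `sr i` the height `1 - i`. The coefficient of `g` in
`x (1+a)(1+b)` is the sum of the coefficients of `x` at `g`, `ga`, `gb`, `gba`, and if `g` has
height `h` these four elements have heights `h`, `h ± 1`, `h`, `h ∓ 1`. Hence, by Pascal's rule
applied twice, the coefficient of an element of height `h` in `[(1+a)(1+b)]ⁿ` is `C(2n-1, n-h)`.
-/

open DihedralGroup MonoidAlgebra

lemma intChoose_natCast (m k : ℕ) : intChoose m k = m.choose k := by
  unfold intChoose
  split_ifs with h
  · simp
  · rw [Nat.choose_eq_zero_of_lt (by omega), Nat.cast_zero]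

lemma intChoose_of_neg (m : ℤ) {j : ℤ} (hj : j < 0) : intChoose m j = 0 :=
  if_neg (by omega)

lemma intChoose_one (j : ℤ) : intChoose 1 j = if j = 0 ∨ j = 1 then 1 else 0 := by
  unfold intChoose
  split_ifs <;> first | omega | (obtain rfl | rfl : j = 0 ∨ j = 1 := by omega) <;> rfl

lemma intChoose_succ (m : ℕ) (j : ℤ) :
    intChoose (m + 1) j = intChoose m j + intChoose m (j - 1) := by
  rcases lt_or_ge j 0 with hj | hj
  · simp [intChoose_of_neg, hj, show j - 1 < 0 by omega]
  lift j to ℕ using hj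
  rw [← Nat.cast_succ, intChoose_natCast, intChoose_natCast]
  rcases j with _ | k
  · simp [intChoose_of_neg]
  · rw [Nat.cast_succ, add_sub_cancel_right, intChoose_natCast, Nat.choose_succ_succ, Nat.cast_add,
      add_comm]

lemma intChoose_add_two (m : ℕ) (j : ℤ) :
    intChoose (m + 2) j = intChoose m j + 2 * intChoose m (j - 1) + intChoose m (j - 2) := by
  have h := intChoose_succ (m + 1) j
  push_cast at h
  rw [show (m : ℤ) + 2 = m + 1 + 1 by ring, h, intChoose_succ, intChoose_succ, sub_sub,
    one_add_one_eq_two]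
  ring

lemma intChoose_symm (m : ℕ) (j : ℤ) : intChoose m (m - j) = intChoose m j := by
  unfold intChoose
  by_cases h : 0 ≤ j ∧ j ≤ m
  · rw [if_pos (by omega), if_pos h]
    lift j to ℕ using h.1
    rw [← Nat.cast_sub (by omega)]
    simp [Nat.choose_symm (show j ≤ m by omega)]
  · rw [if_neg (by omega), if_neg h]

lemma Nat.choose_two_mul_succ (m : ℕ) :
    (2 * (m + 1)).choose (m + 1) = 2 * (2 * m + 1).choose (m + 1) := by
  rw [show 2 * (m + 1) = 2 * m + 1 + 1 by ring, Nat.choose_succ_succ, Nat.choose_symm_half]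
  ring

section Involutions

variable {G : Type*} [Group G] {s t : G}

variable (s) in
def zmodTwoHom (hs : s * s = 1) : Multiplicative (ZMod 2) →* G :=
  AddMonoidHom.toMultiplicativeLeft <| ZMod.lift 2
    ⟨zmultiplesHom (Additive G) (Additive.ofMul s), by
      rw [zmultiplesHom_apply, natCast_zsmul, two_nsmul, ← ofMul_mul, hs, ofMul_one]⟩

@[simp] lemma zmodTwoHom_ofAdd_one (hs : s * s = 1) :
    zmodTwoHom s hs (Multiplicative.ofAdd 1) = s := by
  change Additive.toMul (ZMod.lift 2 _ ((1 : ℤ) : ZMod 2)) = s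
  rw [ZMod.lift_coe]
  simp

lemma MonoidHom.ext_multiplicative_zmod_two {M : Type*} [Monoid M]
    {f g : Multiplicative (ZMod 2) →* M}
    (h : f (Multiplicative.ofAdd 1) = g (Multiplicative.ofAdd 1)) : f = g := by
  refine MonoidHom.ext fun x ↦ ?_
  obtain rfl | rfl : x = 1 ∨ x = Multiplicative.ofAdd 1 := by revert x; decide
  · rw [map_one, map_one]
  · exact h

lemma zpow_mul_mul_self_eq (hs : s * s = 1) (ht : t * t = 1) (i : ℤ) :
    (s * t) ^ i * s = s * (s * t) ^ (-i) := by
  have hts : t * s = (s * t)⁻¹ := by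
    rw [mul_inv_rev, ← mul_eq_one_iff_eq_inv.mp hs, ← mul_eq_one_iff_eq_inv.mp ht]
  have : SemiconjBy s (t * s) (s * t) := (mul_assoc s t s).symm
  rw [← (this.zpow_right i).eq, hts, inv_zpow']

-- `ZMod 0` is `ℤ`, so `i` serves as an integer exponent.
def infDihedralLift (s t : G) (hs : s * s = 1) (ht : t * t = 1) : DihedralGroup 0 →* G where
  toFun
    | r i => (s * t) ^ (show ℤ from i)
    | sr i => s * (s * t) ^ (show ℤ from i)
  map_one' := zpow_zero _
  map_mul' := by
    have key := zpow_mul_mul_self_eq hs ht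
    rintro (i | i) (j | j) <;> change ℤ at i j
    · exact zpow_add _ i j
    · show s * (s * t) ^ (j - i) = (s * t) ^ i * (s * (s * t) ^ j)
      rw [← mul_assoc, key, mul_assoc, ← zpow_add, neg_add_eq_sub]
    · show s * (s * t) ^ (i + j) = s * (s * t) ^ i * (s * t) ^ j
      rw [mul_assoc, ← zpow_add]
    · show (s * t) ^ (j - i) = s * (s * t) ^ i * (s * (s * t) ^ j)
      rw [← mul_assoc, mul_assoc s, key, ← mul_assoc, hs, one_mul, ← zpow_add, neg_add_eq_sub]

lemma infDihedralLift_sr_zero (hs : s * s = 1) (ht : t * t = 1) :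
    infDihedralLift s t hs ht (sr 0) = s :=
  (congrArg (s * ·) (zpow_zero _)).trans (mul_one s)

lemma infDihedralLift_sr_one (hs : s * s = 1) (ht : t * t = 1) :
    infDihedralLift s t hs ht (sr 1) = t :=
  (congrArg (s * ·) (zpow_one _)).trans (by rw [← mul_assoc, hs, one_mul])

end Involutions

lemma genA_mul_self : genA * genA = 1 := by
  rw [genA, ← map_mul, ← ofAdd_add, show (1 : ZMod 2) + 1 = 0 by decide, ofAdd_zero, map_one]

lemma genB_mul_self : genB * genB = 1 := by
  rw [genB, ← map_mul, ← ofAdd_add, show (1 : ZMod 2) + 1 = 0 by decide, ofAdd_zero, map_one]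

noncomputable def toDihedral : Z2Z2 →* DihedralGroup 0 :=
  Monoid.Coprod.lift (zmodTwoHom (sr 0) (sr_mul_self 0)) (zmodTwoHom (sr 1) (sr_mul_self 1))

@[simp] lemma toDihedral_genA : toDihedral genA = sr 0 :=
  (Monoid.Coprod.lift_apply_inl _ _ _).trans (zmodTwoHom_ofAdd_one _)

@[simp] lemma toDihedral_genB : toDihedral genB = sr 1 :=
  (Monoid.Coprod.lift_apply_inr _ _ _).trans (zmodTwoHom_ofAdd_one _)

noncomputable def ofDihedral : DihedralGroup 0 →* Z2Z2 :=
  infDihedralLift genA genB genA_mul_self genB_mul_self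

noncomputable def z2z2EquivDihedral : Z2Z2 ≃* DihedralGroup 0 :=
  toDihedral.toMulEquiv ofDihedral
    (Monoid.Coprod.hom_ext
      (MonoidHom.ext_multiplicative_zmod_two <| show ofDihedral (toDihedral genA) = genA
        by rw [toDihedral_genA]; exact infDihedralLift_sr_zero _ _)
      (MonoidHom.ext_multiplicative_zmod_two <| show ofDihedral (toDihedral genB) = genB
        by rw [toDihedral_genB]; exact infDihedralLift_sr_one _ _))
    (by
      ext (i | i) <;> change ℤ at i
      · show toDihedral ((genA * genB) ^ i) = r i
        rw [map_zpow, map_mul, toDihedral_genA, toDihedral_genB, sr_mul_sr, sub_zero, r_one_zpow]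
        rfl
      · show toDihedral (genA * (genA * genB) ^ i) = sr i
        rw [map_mul, map_zpow, map_mul, toDihedral_genA, toDihedral_genB, sr_mul_sr, sub_zero,
          r_one_zpow, sr_mul_r, zero_add]
        rfl)

@[simp] lemma z2z2EquivDihedral_apply (g : Z2Z2) : z2z2EquivDihedral g = toDihedral g := rfl

def DihedralGroup.height : DihedralGroup 0 → ℤ
  | r i => i
  | sr i => 1 - (show ℤ from i)

lemma DihedralGroup.height_r_natCast (k : ℕ) : height (r k) = k := rfl

lemma DihedralGroup.height_r_neg_natCast (k : ℕ) : height (r (-k)) = -k := rfl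

lemma DihedralGroup.height_sr_neg_natCast (k : ℕ) : height (sr (-k)) = 1 + k :=
  sub_neg_eq_add 1 (k : ℤ)

lemma sum_heights_mul (f : ℤ → ℚ) (g : DihedralGroup 0) :
    f (height g) + f (height (g * sr 0)) + f (height (g * sr 1)) + f (height (g * sr 1 * sr 0))
      = f (height g + 1) + 2 * f (height g) + f (height g - 1) := by
  rcases g with i | i <;> change ℤ at i
  · show f i + f (1 - (0 - i)) + f (1 - (1 - i)) + f (0 - (1 - i))
      = f (i + 1) + 2 * f i + f (i - 1)
    ring_nf
  · show f (1 - i) + f (0 - i) + f (1 - i) + f (1 - (0 - (1 - i)))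
      = f (1 - i + 1) + 2 * f (1 - i) + f (1 - i - 1)
    ring_nf

lemma coeff_mul_one_add_of {k G : Type*} [Semiring k] [Group G] (x : MonoidAlgebra k G)
    (s g : G) :
    (x * (1 + of k G s)).coeff g = x.coeff g + x.coeff (g * s⁻¹) := by
  simp [mul_add]

noncomputable def dihedralPow (n : ℕ) : MonoidAlgebra ℚ (DihedralGroup 0) :=
  ((1 + of ℚ _ (sr 0)) * (1 + of ℚ _ (sr 1))) ^ n

lemma coeff_dihedralPow_succ (n : ℕ) (g : DihedralGroup 0) :
    (dihedralPow (n + 1)).coeff g = (dihedralPow n).coeff g + (dihedralPow n).coeff (g * sr 0)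
      + (dihedralPow n).coeff (g * sr 1) + (dihedralPow n).coeff (g * sr 1 * sr 0) := by
  rw [dihedralPow, pow_succ, ← mul_assoc, ← dihedralPow, coeff_mul_one_add_of,
    coeff_mul_one_add_of, coeff_mul_one_add_of, inv_sr, inv_sr]
  abel

lemma coeff_dihedralPow_one (g : DihedralGroup 0) :
    (dihedralPow 1).coeff g = intChoose 1 (1 - height g) := by
  rw [coeff_dihedralPow_succ]
  simp only [dihedralPow, pow_zero, MonoidAlgebra.one_def, coeff_single, Finsupp.single_apply]
  rcases g with i | i <;>
    simp only [r_mul_sr, sr_mul_sr, DihedralGroup.one_def, r.injEq, reduceCtorEq, if_false,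
      add_zero, zero_add] <;> change ℤ at i
  · show (if (0 : ℤ) = i then (1 : ℚ) else 0) + (if (0 : ℤ) = 0 - (1 - i) then 1 else 0)
      = (intChoose 1 (1 - i) : ℚ)
    rw [intChoose_one]
    split_ifs <;> first | omega | norm_num
  · show (if (0 : ℤ) = 0 - i then (1 : ℚ) else 0) + (if (0 : ℤ) = 1 - i then 1 else 0)
      = (intChoose 1 (1 - (1 - i)) : ℚ)
    rw [intChoose_one]
    split_ifs <;> first | omega | norm_num

lemma coeff_dihedralPow {n : ℕ} (hn : 1 ≤ n) (g : DihedralGroup 0) :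
    (dihedralPow n).coeff g = intChoose (2 * n - 1) (n - height g) := by
  induction n, hn using Nat.le_induction generalizing g with
  | base => simpa using coeff_dihedralPow_one g
  | succ n hn ih =>
    obtain ⟨m, hm⟩ : ∃ m : ℕ, (m : ℤ) = 2 * n - 1 := ⟨2 * n - 1, by omega⟩
    have hsum := sum_heights_mul (fun h ↦ (intChoose (2 * n - 1) (n - h) : ℚ)) g
    rw [coeff_dihedralPow_succ, ih, ih, ih, ih, hsum, ← hm,
      show 2 * ((n + 1 : ℕ) : ℤ) - 1 = m + 2 by push_cast; omega, intChoose_add_two]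
    push_cast
    ring_nf

lemma coeff_wordPow (n : ℕ) (g : Z2Z2) :
    (wordPow n).coeff g = (dihedralPow n).coeff (toDihedral g) := by
  have h : mapDomainRingEquiv ℚ z2z2EquivDihedral (wordPow n) = dihedralPow n := by
    simp [wordPow, dihedralPow]
  rw [← h, coeff_mapDomainRingEquiv, Finsupp.equivMapDomain_apply, ← z2z2EquivDihedral_apply]
  exact congrArg _ (z2z2EquivDihedral.symm_apply_apply g).symm

lemma cCoeff_eq_coeff_dihedralPow (n k : ℕ) : cCoeff n k = (dihedralPow n).coeff (r k) := by
  simp [cCoeff, coeff_wordPow, sr_mul_sr]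

lemma dCoeff_eq_coeff_dihedralPow (n k : ℕ) : dCoeff n k = (dihedralPow n).coeff (sr (-k)) := by
  simp [dCoeff, coeff_wordPow, sr_mul_sr, r_mul_sr]

lemma eCoeff_eq_coeff_dihedralPow (n k : ℕ) : eCoeff n k = (dihedralPow n).coeff (r (-k)) := by
  simp [eCoeff, coeff_wordPow, sr_mul_sr, r_pow]

lemma cCoeff_succ_succ (n k : ℕ) : cCoeff (n + 1) (k + 1)
    = cCoeff n (k + 1) + dCoeff n (k + 1) + dCoeff n k + cCoeff n k := by
  simp only [cCoeff_eq_coeff_dihedralPow, dCoeff_eq_coeff_dihedralPow, coeff_dihedralPow_succ,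
    r_mul_sr, sr_mul_sr]
  push_cast
  ring_nf

lemma dCoeff_succ (n k : ℕ) : dCoeff (n + 1) k
    = dCoeff n k + cCoeff n k + cCoeff n (k + 1) + dCoeff n (k + 1) := by
  simp only [cCoeff_eq_coeff_dihedralPow, dCoeff_eq_coeff_dihedralPow, coeff_dihedralPow_succ,
    r_mul_sr, sr_mul_sr]
  push_cast
  ring_nf

lemma cCoeff_one (k : ℕ) : cCoeff 1 k = (if k = 0 then 1 else 0) + (if k = 1 then 1 else 0) := by
  rw [cCoeff_eq_coeff_dihedralPow, coeff_dihedralPow_one, height_r_natCast, intChoose_one]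
  split_ifs <;> first | omega | norm_num

lemma dCoeff_one (k : ℕ) : dCoeff 1 k = if k = 0 then 1 else 0 := by
  rw [dCoeff_eq_coeff_dihedralPow, coeff_dihedralPow_one, height_sr_neg_natCast, intChoose_one]
  split_ifs <;> first | omega | norm_num

lemma cCoeff_eq_intChoose {n : ℕ} (hn : 1 ≤ n) (k : ℕ) :
    cCoeff n k = (intChoose (2 * n - 1) ((n : ℤ) - k) : ℚ) := by
  rw [cCoeff_eq_coeff_dihedralPow, coeff_dihedralPow hn, height_r_natCast]

lemma dCoeff_eq_intChoose {n : ℕ} (hn : 1 ≤ n) (k : ℕ) :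
    dCoeff n k = (intChoose (2 * n - 1) ((n : ℤ) - k - 1) : ℚ) := by
  rw [dCoeff_eq_coeff_dihedralPow, coeff_dihedralPow hn, height_sr_neg_natCast,
    sub_add_eq_sub_sub_swap]

lemma eCoeff_eq_intChoose {n : ℕ} (hn : 1 ≤ n) (k : ℕ) :
    eCoeff n k = (intChoose (2 * n - 1) ((n : ℤ) - k - 1) : ℚ) := by
  obtain ⟨m, hm⟩ : ∃ m : ℕ, (m : ℤ) = 2 * n - 1 := ⟨2 * n - 1, by omega⟩
  rw [eCoeff_eq_coeff_dihedralPow, coeff_dihedralPow hn, height_r_neg_natCast, ← hm,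
    ← intChoose_symm m]
  congr 2
  omega

lemma cCoeff_zero {n : ℕ} (hn : 1 ≤ n) : cCoeff n 0 = ((2 * n).choose n : ℚ) / 2 := by
  obtain ⟨m, rfl⟩ := Nat.exists_eq_add_of_le' hn
  rw [cCoeff_eq_intChoose hn, Nat.choose_two_mul_succ]
  have h := intChoose_natCast (2 * m + 1) (m + 1)
  push_cast at h ⊢
  rw [show 2 * ((m : ℤ) + 1) - 1 = 2 * m + 1 by ring, sub_zero, h, Int.cast_natCast]
  ring

/-- The counting coefficients `c`, `d`, `e` of the reduced words `(ab)^k`, `(ab)^k a`, `(ba)^k`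
in the expansion of `[(1+a)(1+b)]ⁿ` satisfy the stated recurrences, initial conditions and
closed forms `c(n,k) = C(2n-1, n-k)`, `d(n,k) = C(2n-1, n-k-1) = e(n,k)`,
with `c(n,0) = C(2n,n)/2`. -/
theorem stmt10 :
    (∀ n k : ℕ, 2 ≤ n → 1 ≤ k →
      cCoeff n k = cCoeff (n - 1) k + dCoeff (n - 1) k
        + dCoeff (n - 1) (k - 1) + cCoeff (n - 1) (k - 1)) ∧
    (∀ k : ℕ, cCoeff 1 k = (if k = 0 then 1 else 0) + (if k = 1 then 1 else 0)) ∧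
    (∀ n k : ℕ, 2 ≤ n →
      dCoeff n k = dCoeff (n - 1) k + cCoeff (n - 1) k
        + cCoeff (n - 1) (k + 1) + dCoeff (n - 1) (k + 1)) ∧
    (∀ k : ℕ, dCoeff 1 k = if k = 0 then 1 else 0) ∧
    (∀ n k : ℕ, 1 ≤ n → k ≤ n →
      cCoeff n k = (intChoose (2 * n - 1) ((n : ℤ) - k) : ℚ) ∧
      dCoeff n k = (intChoose (2 * n - 1) ((n : ℤ) - k - 1) : ℚ) ∧
      eCoeff n k = (intChoose (2 * n - 1) ((n : ℤ) - k - 1) : ℚ)) ∧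
    (∀ n : ℕ, 1 ≤ n → cCoeff n 0 = ((2 * n).choose n : ℚ) / 2) := by
  refine ⟨fun n k hn hk ↦ ?_, cCoeff_one, fun n k hn ↦ ?_, dCoeff_one,
    fun n k hn _ ↦
      ⟨cCoeff_eq_intChoose hn k, dCoeff_eq_intChoose hn k, eCoeff_eq_intChoose hn k⟩,
    fun n hn ↦ cCoeff_zero hn⟩
  · obtain ⟨n, rfl⟩ := Nat.exists_eq_add_of_le' (show 1 ≤ n by omega)
    obtain ⟨k, rfl⟩ := Nat.exists_eq_add_of_le' hk
    exact cCoeff_succ_succ n k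
  · obtain ⟨n, rfl⟩ := Nat.exists_eq_add_of_le' (show 1 ≤ n by omega)
    exact dCoeff_succ n k
end

section
/- Formal power series inversion: the formal power series f(z) = z(z+1)/(1+2z)² ∈ ℚ[[z]] has compositional inverse g(z) = (1/2)(1/√(1-4z) − 1) = Σ_{n≥1} (1/2)C(2n,n) z^n; that is, f(g(z)) = z as formal power series. -/
open PowerSeries

/-!
Let `S = ∑ C(2n,n) zⁿ`. From `(n+1) C(2n+2,n+1) = 2(2n+1) C(2n,n)` one gets the differential
equation `(1 - 4z) S' = 2S`, whence `S²(1 - 4z)` has zero derivative and is therefore `1`.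
Since `1 + 2g = S`, we get `4g(g+1) = S² - 1 = 4z S²`, i.e. `f(g) = g(g+1)/S² = z`.
-/

/-- `g(z) = (1/2)(1/√(1-4z) − 1) = ∑_{n≥1} (C(2n,n)/2) zⁿ` as a formal power series over `ℚ`. -/
noncomputable def gSeries : PowerSeries ℚ :=
  PowerSeries.mk fun n => if n = 0 then 0 else ((2 * n).choose n : ℚ) / 2

namespace PowerSeries

variable (R : Type*) [CommRing R]

noncomputable def centralBinomSeries : R⟦X⟧ := mk fun n => (n.centralBinom : R)

@[simp]
theorem coeff_centralBinomSeries (n : ℕ) :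
    coeff n (centralBinomSeries R) = (n.centralBinom : R) :=
  coeff_mk _ _

@[simp]
theorem constantCoeff_centralBinomSeries : constantCoeff (centralBinomSeries R) = 1 := by
  rw [← coeff_zero_eq_constantCoeff_apply, coeff_centralBinomSeries, Nat.centralBinom_zero,
    Nat.cast_one]

theorem one_sub_four_X_mul_derivative_centralBinomSeries :
    (1 - 4 * X) * d⁄dX R (centralBinomSeries R) = 2 * centralBinomSeries R := by
  ext n
  rw [sub_mul, one_mul, ← map_ofNat C 4, ← map_ofNat C 2, mul_assoc, map_sub, coeff_C_mul]
  cases n with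
  | zero =>
    rw [coeff_zero_X_mul, coeff_derivative, coeff_C_mul]
    simp [Nat.centralBinom_eq_two_mul_choose]
  | succ n =>
    have h := congrArg (Nat.cast : ℕ → R) (Nat.succ_mul_centralBinom_succ (n + 1))
    rw [coeff_succ_X_mul, coeff_C_mul, coeff_derivative, coeff_derivative,
      coeff_centralBinomSeries, coeff_centralBinomSeries]
    push_cast at h ⊢
    linear_combination h

theorem centralBinomSeries_sq_mul_one_sub_four_X [IsAddTorsionFree R] :
    centralBinomSeries R ^ 2 * (1 - 4 * X) = 1 := by
  apply derivative.ext
  · have hlin : d⁄dX R (1 - 4 * X : R⟦X⟧) = -4 := by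
      rw [← map_ofNat C 4]
      simp
    rw [Derivation.leibniz, Derivation.leibniz_pow, hlin, Derivation.map_one_eq_zero,
      smul_eq_mul, smul_eq_mul, nsmul_eq_mul]
    linear_combination (2 * centralBinomSeries R) *
      one_sub_four_X_mul_derivative_centralBinomSeries R
  · simp

variable {K : Type*} [Field K]

theorem mul_add_one_mul_inv_one_add_two_mul_sq_eq_X [NeZero (2 : K)] {g : K⟦X⟧}
    (hg : (1 + 2 * g) ^ 2 * (1 - 4 * X) = 1) :
    g * (g + 1) * ((1 + 2 * g) ^ 2)⁻¹ = X := by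
  have hinv : ((1 + 2 * g) ^ 2)⁻¹ = 1 - 4 * X := by
    refine (inv_eq_iff_mul_eq_one ?_).2 (by rw [mul_comm, hg])
    exact ((IsUnit.of_mul_eq_one _ hg).map constantCoeff).ne_zero
  have hfour : (4 : K⟦X⟧) ≠ 0 := by
    rw [← map_ofNat C 4, Ne, map_eq_zero_iff C C_injective, show (4 : K) = 2 * 2 by norm_num]
    exact mul_ne_zero two_ne_zero two_ne_zero
  rw [hinv]
  exact mul_left_cancel₀ hfour (by linear_combination hg)

end PowerSeries

theorem one_add_two_mul_gSeries : 1 + 2 * gSeries = centralBinomSeries ℚ := by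
  rw [← map_ofNat C 2]
  ext (_ | n) <;> simp [gSeries, Nat.centralBinom_eq_two_mul_choose, mul_div_cancel₀]

/-- The formal power series `f(z) = z(z+1)/(1+2z)²` has compositional inverse
`g(z) = (1/2)(1/√(1-4z) − 1) = ∑_{n≥1} (1/2) C(2n,n) zⁿ`: one has `f(g(z)) = z`,
i.e. `g(g+1)(1+2g)⁻² = z` as formal power series over `ℚ`. -/
theorem stmt15 :
    gSeries = PowerSeries.C (R := ℚ) (1 / 2) *
        (PowerSeries.mk (fun n => ((2 * n).choose n : ℚ)) - 1) ∧
    gSeries * (gSeries + 1) * ((1 + 2 * gSeries) ^ 2)⁻¹ = PowerSeries.X := by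
  have hS : PowerSeries.mk (fun n => ((2 * n).choose n : ℚ)) = centralBinomSeries ℚ := rfl
  refine ⟨?_, mul_add_one_mul_inv_one_add_two_mul_sq_eq_X ?_⟩
  · rw [hS, ← one_add_two_mul_gSeries, add_sub_cancel_left, ← map_ofNat C 2, ← mul_assoc,
      ← map_mul]
    norm_num
  · rw [one_add_two_mul_gSeries]
    exact centralBinomSeries_sq_mul_one_sub_four_X ℚ
end

section
/- If s_n(t) := (1/n) L^1_{n-1}(2nt), so that s_1(t) ≡ 1, then the functions s_n satisfy the Rains system: s_1(t) = 1 and s_n'(t) = −n Σ_{k=1}^{n-1} s_{n-k}(t) s_k(t) for all n ≥ 2 and t ≥ 0. -/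
open Finset

/-- The generalized Laguerre polynomial of degree `j` and parameter `1`:
`L¹ⱼ(x) = ∑_{i=0}^j (-1)^i C(j+1, j-i) x^i / i!`. -/
noncomputable def laguerre1 (j : ℕ) (x : ℝ) : ℝ :=
  ∑ i ∈ Finset.range (j + 1),
    (-1 : ℝ) ^ i * ((j + 1).choose (j - i) : ℝ) * x ^ i / (i.factorial : ℝ)

namespace Stmt17Aux

open PowerSeries

/-- The Lagrange coefficients `c_k = (1/k)[w^{k-1}] G^k`. -/
noncomputable def cc (G : PowerSeries ℝ) (k : ℕ) : ℝ :=
  (1 / (k : ℝ)) * coeff (k - 1) (G ^ k)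

/-- The generating series `f = ∑ c_k z^k`. -/
noncomputable def ff (G : PowerSeries ℝ) : PowerSeries ℝ :=
  X * PowerSeries.mk fun k => cc G (k + 1)

lemma coeff_ff (G : PowerSeries ℝ) {k : ℕ} (hk : 1 ≤ k) :
    coeff k (ff G) = cc G k := by
  obtain ⟨m, rfl⟩ : ∃ m, k = m + 1 := ⟨k - 1, by omega⟩
  rw [ff, coeff_succ_X_mul, coeff_mk]

lemma coeff_zero_ff (G : PowerSeries ℝ) : coeff 0 (ff G) = 0 := by
  simp [ff]

lemma coeff_ff_pow_eq_zero (G : PowerSeries ℝ) {m s : ℕ} (h : m < s) :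
    coeff m ((ff G) ^ s) = 0 := by
  have hdvd : (X : PowerSeries ℝ) ^ s ∣ (ff G) ^ s :=
    pow_dvd_pow_of_dvd ⟨PowerSeries.mk fun k => cc G (k + 1), rfl⟩ s
  exact X_pow_dvd_iff.mp hdvd m h

/-- Coefficient form of `(G^{M+1})' = (M+1) G' G^M`. -/
lemma deriv_coeff (G : PowerSeries ℝ) (M m : ℕ) :
    (m : ℝ) * coeff m (G ^ (M + 1)) =
      ((M : ℝ) + 1) * ∑ s ∈ range (m + 1),
        (s : ℝ) * coeff s G * coeff (m - s) (G ^ M) := by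
  cases m with
  | zero => simp
  | succ p =>
    have hD : d⁄dX ℝ (G ^ (M + 1)) = (M + 1) • G ^ (M + 1 - 1) • d⁄dX ℝ G :=
      Derivation.leibniz_pow (D := d⁄dX ℝ) (a := G) (M + 1)
    have h2 : coeff p (d⁄dX ℝ (G ^ (M + 1))) =
        ((M : ℝ) + 1) * coeff p (d⁄dX ℝ G * G ^ M) := by
      rw [hD, Nat.add_sub_cancel, smul_eq_mul, mul_comm (G ^ M), map_nsmul, nsmul_eq_mul]
      push_cast
      ring
    have h1 : coeff p (d⁄dX ℝ (G ^ (M + 1))) =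
        coeff (p + 1) (G ^ (M + 1)) * (p + 1) := coeff_derivative _ _
    have h3 : coeff p (d⁄dX ℝ G * G ^ M) =
        ∑ k ∈ range (p + 1), ((k : ℝ) + 1) * coeff (k + 1) G * coeff (p - k) (G ^ M) := by
      rw [coeff_mul, Finset.Nat.sum_antidiagonal_eq_sum_range_succ_mk]
      refine Finset.sum_congr rfl fun k _ => ?_
      rw [coeff_derivative]
      push_cast
      ring
    have h4 : ∑ s ∈ range (p + 1 + 1), (s : ℝ) * coeff s G * coeff (p + 1 - s) (G ^ M)
        = ∑ k ∈ range (p + 1), ((k : ℝ) + 1) * coeff (k + 1) G * coeff (p - k) (G ^ M) := by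
      rw [Finset.sum_range_succ']
      simp only [Nat.cast_zero, zero_mul]
      rw [add_zero]
      refine Finset.sum_congr rfl fun k _ => ?_
      have : p + 1 - (k + 1) = p - k := by omega
      rw [this]
      push_cast
      ring
    rw [h4, ← h3, ← h2, h1]
    push_cast
    ring

/-- The key Lagrange-inversion identity: `n [z^n] f^r = r [w^{n-r}] G^n`. -/
lemma keyA (G : PowerSeries ℝ) :
    ∀ n : ℕ, ∀ r : ℕ, 1 ≤ r → r ≤ n →
      (n : ℝ) * coeff n ((ff G) ^ r) = (r : ℝ) * coeff (n - r) (G ^ n) := by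
  intro n
  induction n using Nat.strong_induction_on with
  | _ n IH =>
    -- the truncated functional equation  f = z G(f)  up to order n
    have FE : ∀ b : ℕ, 1 ≤ b → b ≤ n →
        coeff b (ff G) = ∑ s ∈ range n, coeff s G * coeff (b - 1) ((ff G) ^ s) := by
      intro b hb1 hbn
      have hn1 : 1 ≤ n := le_trans hb1 hbn
      rcases Nat.lt_or_ge b 2 with hb | hb
      · -- b = 1
        interval_cases b
        rw [coeff_ff G (le_refl 1)]
        have hterm : ∀ s ∈ range n, coeff s G * coeff (1 - 1) ((ff G) ^ s)
            = if s = 0 then coeff 0 G else 0 := by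
          intro s _
          rcases Nat.eq_zero_or_pos s with rfl | hs
          · simp
          · rw [if_neg (by omega)]
            have : coeff (1 - 1) ((ff G) ^ s) = 0 := coeff_ff_pow_eq_zero G hs
            rw [this, mul_zero]
        rw [Finset.sum_congr rfl hterm, Finset.sum_ite_eq' (range n) 0
          (fun _ => coeff 0 G), if_pos (Finset.mem_range.mpr (by omega))]
        simp [cc]
      · -- b ≥ 2 : use the induction hypothesis at m = b - 1
        obtain ⟨m, rfl⟩ : ∃ m, b = m + 1 := ⟨b - 1, by omega⟩
        have hm1 : 1 ≤ m := by omega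
        have hmn : m < n := by omega
        have hmne : (m : ℝ) ≠ 0 := by positivity
        have step : ∀ s ∈ range n, coeff s G * coeff (m + 1 - 1) ((ff G) ^ s)
            = if s ∈ range (m + 1) then
                coeff s G * ((s : ℝ) * coeff (m - s) (G ^ m) / (m : ℝ)) else 0 := by
          intro s _
          rw [Nat.add_sub_cancel]
          by_cases hsm : s ∈ range (m + 1)
          · rw [if_pos hsm]
            rcases Nat.eq_zero_or_pos s with rfl | hs
            · have h0 : coeff m (((ff G)) ^ 0) = 0 := by
                rw [pow_zero, coeff_one, if_neg (by omega)]
              rw [h0]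
              push_cast
              ring
            · have hsle : s ≤ m := by
                have := Finset.mem_range.mp hsm; omega
              have hIH := IH m hmn s hs hsle
              have : coeff m ((ff G) ^ s) = (s : ℝ) * coeff (m - s) (G ^ m) / (m : ℝ) := by
                field_simp
                linarith [hIH]
              rw [this]
          · rw [if_neg hsm]
            have hms : m < s := by
              by_contra hc
              exact hsm (Finset.mem_range.mpr (by omega))
            rw [coeff_ff_pow_eq_zero G hms, mul_zero]
        rw [Finset.sum_congr rfl step, Finset.sum_ite_mem,
          Finset.inter_eq_right.mpr (Finset.range_subset_range.mpr (by omega))]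
        have hsum : ∑ s ∈ range (m + 1),
            coeff s G * ((s : ℝ) * coeff (m - s) (G ^ m) / (m : ℝ))
            = (∑ s ∈ range (m + 1),
                (s : ℝ) * coeff s G * coeff (m - s) (G ^ m)) / (m : ℝ) := by
          rw [Finset.sum_div]
          exact Finset.sum_congr rfl fun s _ => by ring
        have hder := deriv_coeff G m m
        rw [hsum, coeff_ff G (by omega : 1 ≤ m + 1), cc, Nat.add_sub_cancel]
        have hm1ne : ((m : ℝ) + 1) ≠ 0 := by positivity
        have hS : (∑ s ∈ range (m + 1), (s : ℝ) * coeff s G * coeff (m - s) (G ^ m))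
            = (m : ℝ) * coeff m (G ^ (m + 1)) / ((m : ℝ) + 1) := by
          field_simp
          linarith [hder]
        rw [hS]
        push_cast
        field_simp
    -- main induction on r
    intro r hr1 hrn
    obtain ⟨r', rfl⟩ : ∃ r', r = r' + 1 := ⟨r - 1, by omega⟩
    rcases Nat.eq_zero_or_pos r' with rfl | hr'
    · -- r = 1 : this is the definition of cc
      have hn1 : 1 ≤ n := hrn
      rw [zero_add, pow_one, coeff_ff G hn1, cc]
      have hne : (n : ℝ) ≠ 0 := by positivity
      push_cast
      field_simp
    · -- r = r' + 1 with r' ≥ 1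
      have hn2 : 2 ≤ n := by omega
      have hcast1 : (2 : ℝ) ≤ (n : ℝ) := by exact_mod_cast hn2
      have hne1 : ((n : ℝ) - 1) ≠ 0 := by linarith
      have hne0 : (n : ℝ) ≠ 0 := by positivity
      -- Step 1 : coeff n (f^{r'+1}) = ∑_{s<n} g_s coeff_{n-1} f^{r'+s}
      have step1 : coeff n ((ff G) ^ (r' + 1)) =
          ∑ s ∈ range n, coeff s G * coeff (n - 1) ((ff G) ^ (r' + s)) := by
        rw [pow_succ, coeff_mul, Finset.Nat.sum_antidiagonal_eq_sum_range_succ_mk,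
          Finset.sum_range_succ, Nat.sub_self, coeff_zero_ff, mul_zero, add_zero]
        have hsub : ∀ k ∈ range n, coeff k ((ff G) ^ r') * coeff (n - k) (ff G)
            = ∑ s ∈ range n,
                coeff k ((ff G) ^ r') * (coeff s G * coeff (n - 1 - k) ((ff G) ^ s)) := by
          intro k hk
          have hkn : k < n := Finset.mem_range.mp hk
          rw [FE (n - k) (by omega) (by omega), Finset.mul_sum]
          refine Finset.sum_congr rfl fun ss _ => ?_
          have : n - k - 1 = n - 1 - k := by omega
          rw [this]
        rw [Finset.sum_congr rfl hsub, Finset.sum_comm]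
        refine Finset.sum_congr rfl fun ss _ => ?_
        have hrs : coeff (n - 1) ((ff G) ^ (r' + ss)) =
            ∑ k ∈ range n, coeff k ((ff G) ^ r') * coeff (n - 1 - k) ((ff G) ^ ss) := by
          rw [pow_add, coeff_mul, Finset.Nat.sum_antidiagonal_eq_sum_range_succ_mk]
          have hn' : n - 1 + 1 = n := by omega
          simp only [Nat.succ_eq_add_one, hn']
        rw [hrs, Finset.mul_sum]
        refine Finset.sum_congr rfl fun k _ => ?_
        ring
      -- Step 2 : evaluate each term with the induction hypothesis at n-1
      have hcastn1 : ((n - 1 : ℕ) : ℝ) = (n : ℝ) - 1 := by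
        rw [Nat.cast_sub (by omega : 1 ≤ n), Nat.cast_one]
      have step2 : ∀ s ∈ range n, coeff s G * coeff (n - 1) ((ff G) ^ (r' + s))
          = if s ∈ range (n - r') then
              coeff s G * (((r' : ℝ) + (s : ℝ)) * coeff (n - 1 - r' - s) (G ^ (n - 1))
                / ((n : ℝ) - 1)) else 0 := by
        intro s _
        by_cases hsm : s ∈ range (n - r')
        · rw [if_pos hsm]
          have hsn : s < n - r' := Finset.mem_range.mp hsm
          have h1 : 1 ≤ r' + s := by omega
          have h2 : r' + s ≤ n - 1 := by omega
          have hIH := IH (n - 1) (by omega) (r' + s) h1 h2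
          rw [hcastn1] at hIH
          have hcast2 : (((r' + s : ℕ)) : ℝ) = (r' : ℝ) + (s : ℝ) := by push_cast; ring
          rw [hcast2] at hIH
          have hidx : n - 1 - (r' + s) = n - 1 - r' - s := by omega
          rw [hidx] at hIH
          have : coeff (n - 1) ((ff G) ^ (r' + s)) =
              ((r' : ℝ) + (s : ℝ)) * coeff (n - 1 - r' - s) (G ^ (n - 1)) / ((n : ℝ) - 1) := by
            field_simp
            linarith [hIH]
          rw [this]
        · rw [if_neg hsm]
          have hms : n - 1 < r' + s := by
            have : ¬ s < n - r' := fun h => hsm (Finset.mem_range.mpr h)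
            omega
          rw [coeff_ff_pow_eq_zero G hms, mul_zero]
      have hrange : range n ∩ range (n - r') = range (n - r') :=
        Finset.inter_eq_right.mpr (Finset.range_subset_range.mpr (by omega))
      rw [step1, Finset.sum_congr rfl step2, Finset.sum_ite_mem, hrange]
      -- Step 3 : split into the two closed sums
      have hnr : n - r' = (n - 1 - r') + 1 := by omega
      set m' := n - 1 - r' with hm'
      have hsplit : ∑ s ∈ range (n - r'),
          coeff s G * (((r' : ℝ) + (s : ℝ)) * coeff (m' - s) (G ^ (n - 1)) / ((n : ℝ) - 1))
          = ((r' : ℝ) * ∑ s ∈ range (m' + 1), coeff s G * coeff (m' - s) (G ^ (n - 1))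
            + ∑ s ∈ range (m' + 1),
                (s : ℝ) * coeff s G * coeff (m' - s) (G ^ (n - 1))) / ((n : ℝ) - 1) := by
        rw [hnr, Finset.mul_sum, ← Finset.sum_add_distrib, Finset.sum_div]
        refine Finset.sum_congr rfl fun s _ => ?_
        ring
      rw [hsplit]
      -- first sum : coeff_{m'} (G * G^{n-1}) = coeff_{m'} G^n
      have hS1 : ∑ s ∈ range (m' + 1), coeff s G * coeff (m' - s) (G ^ (n - 1))
          = coeff m' (G ^ n) := by
        have : G ^ n = G * G ^ (n - 1) := by
          rw [← pow_succ']
          congr 1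
          omega
        rw [this, coeff_mul, Finset.Nat.sum_antidiagonal_eq_sum_range_succ_mk]
      -- second sum : from the derivative identity
      have hS2 : ∑ s ∈ range (m' + 1), (s : ℝ) * coeff s G * coeff (m' - s) (G ^ (n - 1))
          = (m' : ℝ) * coeff m' (G ^ n) / (n : ℝ) := by
        have hder := deriv_coeff G (n - 1) m'
        have hpow : (n - 1) + 1 = n := by omega
        rw [hpow, hcastn1] at hder
        have : ((n : ℝ) - 1) + 1 = (n : ℝ) := by ring
        rw [this] at hder
        field_simp
        linarith [hder]
      rw [hS1, hS2]
      have hidx2 : n - (r' + 1) = m' := by omega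
      rw [hidx2]
      have hcastm' : (m' : ℝ) = (n : ℝ) - 1 - (r' : ℝ) := by
        rw [hm', Nat.cast_sub (by omega : r' ≤ n - 1), hcastn1]
      rw [hcastm']
      push_cast
      field_simp
      ring

/-- The explicit series `G(w) = (1+w) e^{-2tw}`. -/
noncomputable def Gs (t : ℝ) : PowerSeries ℝ :=
  (1 + X) * rescale (-(2 * t)) (PowerSeries.exp ℝ)

lemma coeff_one_add_X_pow (N m : ℕ) :
    coeff m ((1 + X : PowerSeries ℝ) ^ N) = (N.choose m : ℝ) := by
  rw [add_comm (1 : PowerSeries ℝ) X, add_pow, map_sum]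
  have hterm : ∀ k ∈ range (N + 1),
      coeff m ((X : PowerSeries ℝ) ^ k * 1 ^ (N - k) * ((N.choose k : ℕ) : PowerSeries ℝ))
        = if m = k then (N.choose k : ℝ) else 0 := by
    intro k _
    rw [one_pow, mul_one]
    have : ((N.choose k : ℕ) : PowerSeries ℝ) = C ((N.choose k : ℕ) : ℝ) := by
      rw [map_natCast]
    rw [this, coeff_mul_C, coeff_X_pow, ite_mul, one_mul, zero_mul]
  rw [Finset.sum_congr rfl hterm, Finset.sum_ite_eq (range (N + 1)) m
    (fun k => (N.choose k : ℝ))]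
  by_cases hm : m ∈ range (N + 1)
  · rw [if_pos hm]
  · rw [if_neg hm]
    have : N < m := by
      have : ¬ m < N + 1 := fun h => hm (Finset.mem_range.mpr h)
      omega
    rw [Nat.choose_eq_zero_of_lt this, Nat.cast_zero]

lemma coeff_Gs_pow (t : ℝ) (N m : ℕ) :
    coeff m (Gs t ^ N) =
      ∑ i ∈ range (m + 1),
        (N.choose (m - i) : ℝ) * (-(2 * t * N)) ^ i / (i.factorial : ℝ) := by
  have hE : (rescale (-(2 * t)) (PowerSeries.exp ℝ)) ^ N
      = rescale (-(2 * t * N)) (PowerSeries.exp ℝ) := by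
    rw [← map_pow, PowerSeries.exp_pow_eq_rescale_exp, rescale_rescale]
    congr 1
    ring
  rw [Gs, mul_pow, hE, mul_comm, coeff_mul, Finset.Nat.sum_antidiagonal_eq_sum_range_succ_mk]
  refine Finset.sum_congr rfl fun i _ => ?_
  rw [coeff_rescale, PowerSeries.coeff_exp, coeff_one_add_X_pow]
  have : (algebraMap ℚ ℝ) (1 / (i.factorial : ℚ)) = 1 / (i.factorial : ℝ) := by
    rw [map_div₀, map_one, map_natCast]
  rw [this]
  ring

lemma cc_Gs (t : ℝ) (k : ℕ) (hk : 1 ≤ k) :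
    cc (Gs t) k = (1 / (k : ℝ)) * laguerre1 (k - 1) (2 * (k : ℝ) * t) := by
  rw [cc, coeff_Gs_pow, laguerre1]
  have hk1 : k - 1 + 1 = k := by omega
  rw [hk1]
  congr 1
  refine Finset.sum_congr rfl fun i _ => ?_
  have hneg : (-(2 * t * (k : ℝ))) ^ i = (-1 : ℝ) ^ i * (2 * (k : ℝ) * t) ^ i := by
    rw [show -(2 * t * (k : ℝ)) = (-1) * (2 * (k : ℝ) * t) by ring, mul_pow]
  rw [hneg]
  ring


end Stmt17Aux

/-- The functions `s_n(t) = (1/n) L¹_{n-1}(2nt)` satisfy the Rains system: `s₁ ≡ 1` and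
`s_n'(t) = −n ∑_{k=1}^{n-1} s_{n-k}(t) s_k(t)` for all `n ≥ 2` and `t ≥ 0`. -/
theorem stmt17 (s : ℕ → ℝ → ℝ)
    (hs : ∀ (n : ℕ) (t : ℝ), s n t = (1 / (n : ℝ)) * laguerre1 (n - 1) (2 * n * t)) :
    (∀ t : ℝ, s 1 t = 1) ∧
    (∀ n : ℕ, 2 ≤ n → ∀ t : ℝ, 0 ≤ t →
      HasDerivAt (s n) (-(n : ℝ) * ∑ k ∈ Finset.Icc 1 (n - 1), s (n - k) t * s k t) t) := by
  constructor
  · intro t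
    rw [hs]
    norm_num [laguerre1]
  · intro n hn t ht
    open Stmt17Aux PowerSeries in
    have hne0 : (n : ℝ) ≠ 0 := by positivity
    set a : ℕ → ℝ := fun i =>
      (-1 : ℝ) ^ i * (n.choose (n - 1 - i) : ℝ) * (2 * (n : ℝ)) ^ i
        / ((n : ℝ) * (i.factorial : ℝ)) with ha
    have hn1 : n - 1 + 1 = n := by omega
    have hfun : s n = fun u => ∑ i ∈ range n, a i * u ^ i := by
      funext u
      rw [hs, laguerre1, hn1, Finset.mul_sum]
      refine Finset.sum_congr rfl fun i _ => ?_
      rw [mul_pow (2 * (n : ℝ)) u i, ha]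
      ring
    -- identification of the coefficients with s
    have hs_cc : ∀ k, 1 ≤ k → s k t = cc (Gs t) k := by
      intro k hk
      rw [hs, cc_Gs t k hk]
    have hccf : ∀ k, 1 ≤ k → coeff k (ff (Gs t)) = s k t := by
      intro k hk
      rw [coeff_ff _ hk]
      exact (hs_cc k hk).symm
    -- the quadratic sum is the n-th coefficient of f^2
    have hsum : ∑ k ∈ Finset.Icc 1 (n - 1), s (n - k) t * s k t
        = coeff n ((ff (Gs t)) ^ 2) := by
      have hsub : Finset.Icc 1 (n - 1) ⊆ range (n + 1) := by
        intro x hx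
        have := Finset.mem_Icc.mp hx
        exact Finset.mem_range.mpr (by omega)
      have hz : ∀ x ∈ range (n + 1), x ∉ Finset.Icc 1 (n - 1) →
          coeff x (ff (Gs t)) * coeff (n - x) (ff (Gs t)) = 0 := by
        intro x hx hnx
        have hxn : x < n + 1 := Finset.mem_range.mp hx
        have : x = 0 ∨ x = n := by
          rcases Finset.mem_Icc.not.mp hnx with h
          omega
        rcases this with rfl | rfl
        · rw [coeff_zero_ff, zero_mul]
        · rw [Nat.sub_self, coeff_zero_ff, mul_zero]
      calc ∑ k ∈ Finset.Icc 1 (n - 1), s (n - k) t * s k t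
          = ∑ k ∈ Finset.Icc 1 (n - 1),
              coeff k (ff (Gs t)) * coeff (n - k) (ff (Gs t)) := by
            refine Finset.sum_congr rfl fun k hk => ?_
            obtain ⟨hk1, hk2⟩ := Finset.mem_Icc.mp hk
            rw [hccf k hk1, hccf (n - k) (by omega)]
            ring
        _ = ∑ k ∈ range (n + 1),
              coeff k (ff (Gs t)) * coeff (n - k) (ff (Gs t)) :=
            Finset.sum_subset hsub hz
        _ = coeff n ((ff (Gs t)) ^ 2) := by
            rw [pow_two, coeff_mul, Finset.Nat.sum_antidiagonal_eq_sum_range_succ_mk]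
    have h2 := keyA (Gs t) n 2 (by omega) hn
    -- the value of the derivative
    have key : -(n : ℝ) * ∑ k ∈ Finset.Icc 1 (n - 1), s (n - k) t * s k t
        = ∑ i ∈ range n, a i * ((i : ℝ) * t ^ (i - 1)) := by
      rw [hsum]
      have hval : -(n : ℝ) * coeff n ((ff (Gs t)) ^ 2)
          = -2 * coeff (n - 2) (Gs t ^ n) := by
        have : ((2 : ℕ) : ℝ) = 2 := by norm_num
        rw [this] at h2
        linarith [h2]
      rw [hval, coeff_Gs_pow]
      obtain ⟨q, rfl⟩ : ∃ q, n = q + 2 := ⟨n - 2, by omega⟩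
      have hq2 : q + 2 - 2 = q := by omega
      rw [hq2]
      have hL : ∑ i ∈ range (q + 2), a i * ((i : ℝ) * t ^ (i - 1))
          = ∑ j ∈ range (q + 1), a (j + 1) * (((j : ℝ) + 1) * t ^ j) := by
        have hpeel := Finset.sum_range_succ' (fun i => a i * ((i : ℝ) * t ^ (i - 1))) (q + 1)
        rw [show q + 2 = q + 1 + 1 from rfl]
        rw [hpeel]
        have h0 : a 0 * (((0 : ℕ) : ℝ) * t ^ (0 - 1)) = 0 := by
          push_cast
          ring
        rw [h0, add_zero]
        refine Finset.sum_congr rfl fun j _ => ?_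
        have : ((j + 1 : ℕ) : ℝ) = (j : ℝ) + 1 := by push_cast; ring
        rw [Nat.add_sub_cancel, this]
      rw [hL, Finset.mul_sum]
      refine Finset.sum_congr rfl fun j hj => ?_
      have hidx : q + 2 - 1 - (j + 1) = q - j := by omega
      have hfac : (((j + 1).factorial : ℕ) : ℝ) = ((j : ℝ) + 1) * (j.factorial : ℝ) := by
        rw [Nat.factorial_succ]
        push_cast
        ring
      have hnegpow : (-(2 * t * ((q + 2 : ℕ) : ℝ))) ^ j
          = (-1 : ℝ) ^ j * (2 * ((q + 2 : ℕ) : ℝ)) ^ j * t ^ j := by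
        rw [show -(2 * t * ((q + 2 : ℕ) : ℝ)) = (-1) * ((2 * ((q + 2 : ℕ) : ℝ)) * t) by ring,
          mul_pow, mul_pow]
        ring
      have hfacne : (j.factorial : ℝ) ≠ 0 := by positivity
      have hj1ne : ((j : ℝ) + 1) ≠ 0 := by positivity
      rw [ha]
      simp only [hidx]
      rw [hfac, hnegpow, pow_succ]
      field_simp
      ring
    rw [hfun, key]
    exact HasDerivAt.fun_sum fun i _ => (hasDerivAt_pow i t).const_mul (a i)
end
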